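/- Let α ∈ 𝕋 and h : 𝕋 → 𝕋 be a continuous map with nonzero winding number. Then for every ε > 0, the set {m ∈ ℕ : ‖mα‖ < ε} is contained in the set of ε-returns of the skew product system T_h(x,t) = (x + α, t + h(x)) on 𝕋², i.e. for each such m there exists (x,t) ∈ 𝕋² with d((x,t), T_h^m(x,t)) < ε in the L¹ metric. -/

import Mathlib

open Function Metric Set Filter

noncomputable section

abbrev Torus := AddCircle (1 : ℝ)

/-- `A ⊆ ℕ` is a Bohr₀ set: it contains all positive `n` with `‖nα‖ < δ`
for some `δ > 0`, `d ∈ ℕ`, `α ∈ 𝕋^d` (L¹ distance to zero). -/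
def IsBohr0 (A : Set ℕ) : Prop :=
  ∃ (d : ℕ) (α : Fin d → Torus) (δ : ℝ), 0 < δ ∧
    ∀ n : ℕ, 0 < n → (∑ i, ‖n • α i‖) < δ → n ∈ A


/-- The skew product map `T_h(x,t) = (x + α, t + h(x))` on `𝕋²`. -/
def skew (α : Torus) (h : Torus → Torus) : Torus × Torus → Torus × Torus :=
  fun p => (p.1 + α, p.2 + h p.1)

lemma skew_iterate (α : Torus) (h : Torus → Torus) (n : ℕ) (x t : Torus) :
    (skew α h)^[n] (x, t) = (x + n • α, t + ∑ i ∈ Finset.range n, h (x + i • α)) := by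
  induction n with
  | zero => simp
  | succ n ih =>
    rw [Function.iterate_succ_apply', ih, skew, Finset.sum_range_succ, succ_nsmul]
    simp only [Prod.mk.injEq]
    constructor <;> abel

lemma torus_coe_sum {ι : Type*} (s : Finset ι) (f : ι → ℝ) :
    ((∑ i ∈ s, f i : ℝ) : Torus) = ∑ i ∈ s, ((f i : ℝ) : Torus) := by
  classical
  induction s using Finset.induction with
  | empty => simp
  | insert _ _ hx ih =>
    rw [Finset.sum_insert hx, Finset.sum_insert hx, ← ih]
    rfl

theorem nonzero_winding_returns (α : Torus) (h : Torus → Torus) (hc : Continuous h)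
    (φ : ℝ → ℝ) (hφc : Continuous φ)
    (hlift : ∀ x : ℝ, ((φ x : Torus)) = h ((x : ℝ) : Torus))
    (hdeg : φ 1 - φ 0 ≠ 0)
    (ε : ℝ) (hε : 0 < ε) (m : ℕ) (hm : ‖m • α‖ < ε) :
    ∃ p : Torus × Torus,
      dist p.1 ((skew α h)^[m] p).1 + dist p.2 ((skew α h)^[m] p).2 < ε := by
  rcases Nat.eq_zero_or_pos m with hm0 | hm0
  · exact ⟨(0, 0), by simp [hm0, hε]⟩
  set g : ℝ → ℝ := fun x => φ (x + 1) - φ x with hg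
  have hgdef : ∀ x : ℝ, g x = φ (x + 1) - φ x := fun x => rfl
  -- the increment g is always an integer
  have hint : ∀ x : ℝ, ∃ n : ℤ, (n : ℝ) = g x := by
    intro x
    have key : ((g x : ℝ) : Torus) = 0 := by
      have h1 : ((φ (x + 1) : ℝ) : Torus) = ((φ x : ℝ) : Torus) := by
        rw [hlift, hlift]
        congr 1
        have e : ((x + 1 : ℝ) : Torus) = (x : Torus) + ((1 : ℝ) : Torus) := rfl
        rw [e]
        simp
      have h2 : ((g x : ℝ) : Torus)
          = ((φ (x + 1) : ℝ) : Torus) - ((φ x : ℝ) : Torus) := rfl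
      rw [h2, h1, sub_self]
    rcases (AddCircle.coe_eq_zero_iff (1 : ℝ)).mp key with ⟨n, hn⟩
    exact ⟨n, by simpa using hn⟩
  have hgc : Continuous g := (hφc.comp (continuous_id.add continuous_const)).sub hφc
  -- g is constant (IVT)
  have key : ∀ a b : ℝ, g a < g b → False := by
    intro a b hab
    rcases hint a with ⟨na, hna⟩
    rcases hint b with ⟨nb, hnb⟩
    have hnanb : na < nb := by rw [← hna, ← hnb] at hab; exact_mod_cast hab
    have hle : (na : ℝ) + 1 ≤ nb := by exact_mod_cast Int.add_one_le_iff.mpr hnanb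
    have hmem : g a + 1 / 2 ∈ Set.uIcc (g a) (g b) := by
      rw [Set.mem_uIcc]
      left
      exact ⟨by linarith, by rw [← hna, ← hnb]; linarith⟩
    obtain ⟨z, _, hz⟩ := intermediate_value_uIcc (a := a) (b := b) hgc.continuousOn hmem
    rcases hint z with ⟨nz, hnz⟩
    have hval : (nz : ℝ) = na + 1 / 2 := by rw [hnz, hz, ← hna]
    have h2 : ((2 * nz : ℤ) : ℝ) = ((2 * na + 1 : ℤ) : ℝ) := by push_cast; linarith
    have := Int.cast_injective h2
    omega
  have hconst : ∀ x y : ℝ, g x = g y := by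
    intro x y
    rcases lt_trichotomy (g x) (g y) with hlt | heq | hgt
    · exact absurd hlt (fun hh => key x y hh)
    · exact heq
    · exact absurd hgt (fun hh => key y x hh)
  rcases hint 0 with ⟨k, hk⟩
  have hstep : ∀ y : ℝ, φ (y + 1) = φ y + k := by
    intro y
    have h2 : g y = (k : ℝ) := by rw [hconst y 0, ← hk]
    rw [hgdef] at h2
    linarith
  have hk0 : k ≠ 0 := by
    intro hk0
    apply hdeg
    have := hstep 0
    rw [hk0, zero_add] at this
    simp at this
    rw [this]
    ring
  -- lifts of i • α
  have ha : ∀ i : ℕ, ∃ r : ℝ, (r : Torus) = i • α := fun i => Quotient.exists_rep _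
  choose a haspec using ha
  -- the Birkhoff lift
  set F : ℝ → ℝ := fun x => ∑ i ∈ Finset.range m, φ (x + a i) with hF
  have hFdef : ∀ x : ℝ, F x = ∑ i ∈ Finset.range m, φ (x + a i) := fun _ => rfl
  have hFc : Continuous F := by
    apply continuous_finset_sum
    intro i _
    exact hφc.comp (continuous_id.add continuous_const)
  have hF1 : F 1 = F 0 + (m : ℝ) * k := by
    rw [hFdef, hFdef]
    have he : ∀ i ∈ Finset.range m, φ (1 + a i) = φ (0 + a i) + k := by
      intro i _
      rw [add_comm (1 : ℝ) (a i), hstep (a i), zero_add]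
    rw [Finset.sum_congr rfl he, Finset.sum_add_distrib]
    simp [mul_comm]
  -- find an integer value of F on [0,1]
  have hex : ∃ (x₀ : ℝ) (n : ℤ), F x₀ = n := by
    have hm1 : (1 : ℝ) ≤ m := by exact_mod_cast hm0
    rcases lt_or_gt_of_ne hk0 with hkneg | hkpos
    · have hk1 : (k : ℝ) ≤ -1 := by
        have : k ≤ -1 := by omega
        exact_mod_cast this
      have hmk : (m : ℝ) * k ≤ -1 := by nlinarith
      have hmem : (⌊F 0⌋ : ℝ) ∈ Set.uIcc (F 0) (F 1) := by
        rw [Set.mem_uIcc]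
        right
        exact ⟨by rw [hF1]; linarith [Int.sub_one_lt_floor (F 0)], Int.floor_le _⟩
      obtain ⟨z, _, hz⟩ := intermediate_value_uIcc (a := (0:ℝ)) (b := 1) hFc.continuousOn hmem
      exact ⟨z, ⌊F 0⌋, hz⟩
    · have hk1 : (1 : ℝ) ≤ k := by exact_mod_cast hkpos
      have hmk : (1 : ℝ) ≤ (m : ℝ) * k := by nlinarith
      have hmem : (⌈F 0⌉ : ℝ) ∈ Set.uIcc (F 0) (F 1) := by
        rw [Set.mem_uIcc]
        left
        exact ⟨Int.le_ceil _, by rw [hF1]; linarith [Int.ceil_lt_add_one (F 0)]⟩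
      obtain ⟨z, _, hz⟩ := intermediate_value_uIcc (a := (0:ℝ)) (b := 1) hFc.continuousOn hmem
      exact ⟨z, ⌈F 0⌉, hz⟩
  obtain ⟨x₀, n, hx₀⟩ := hex
  refine ⟨((x₀ : Torus), 0), ?_⟩
  rw [skew_iterate]
  have hsum : ∑ i ∈ Finset.range m, h ((x₀ : Torus) + i • α) = 0 := by
    have heach : ∀ i ∈ Finset.range m,
        h ((x₀ : Torus) + i • α) = ((φ (x₀ + a i) : ℝ) : Torus) := by
      intro i _
      rw [hlift]
      congr 1
      have e : ((x₀ + a i : ℝ) : Torus) = (x₀ : Torus) + ((a i : ℝ) : Torus) := rfl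
      rw [e, haspec]
    rw [Finset.sum_congr rfl heach, ← torus_coe_sum, ← hFdef, hx₀]
    exact (AddCircle.coe_eq_zero_iff (1 : ℝ)).mpr ⟨n, by simp⟩
  simp only [hsum, add_zero, dist_self]
  have hd : dist (x₀ : Torus) ((x₀ : Torus) + m • α) = ‖m • α‖ := by
    rw [dist_eq_norm]; simp
  simpa [hd] using hm
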